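/- arXiv:2308.00498 — 2 statements merged into one kernel-verified Lean document; each statement's English description precedes it below -/
import Mathlib

section
/- Let k ≥ 3 and let (G_i) be the C_k-bootstrap process on a graph G. For all vertices x, y in the same component and all i ≥ 1, dist_{G_i}(x,y) ≤ ⌊dist_{G_0}(x,y)/(k-1)^i⌋ + k - 2. Moreover, if (k-1)^i divides dist_{G_0}(x,y), then dist_{G_i}(x,y) ≤ dist_{G_0}(x,y)/(k-1)^i. -/
/-- One step of the `C_k`-bootstrap process: add every edge whose endpoints are
joined by a path of length `k-1` in the current graph. -/
def cycleStep (k : ℕ) {V : Type*} (G : SimpleGraph V) : SimpleGraph V where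
  Adj u v := G.Adj u v ∨ (u ≠ v ∧ ∃ p : G.Walk u v, p.IsPath ∧ p.length = k - 1)
  symm := by
    constructor
    intro u v h
    rcases h with h | ⟨hne, p, hp, hl⟩
    · exact Or.inl h.symm
    · exact Or.inr ⟨hne.symm, p.reverse, hp.reverse, by simpa using hl⟩
  loopless := by
    constructor
    intro v h
    rcases h with h | ⟨hne, _⟩
    · exact G.ne_of_adj h rfl
    · exact hne rfl

/-- The `C_k`-bootstrap process on `G`. -/
def cycleProcess (k : ℕ) {V : Type*} (G : SimpleGraph V) : ℕ → SimpleGraph V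
  | 0 => G
  | (i + 1) => cycleStep k (cycleProcess k G i)

namespace CycleAux

open SimpleGraph

variable {V : Type*}

lemma getVert_mem_support {G : SimpleGraph V} {u v : V} (p : G.Walk u v) (n : ℕ) :
    p.getVert n ∈ p.support := by
  rw [SimpleGraph.Walk.mem_support_iff_exists_getVert]
  by_cases h : n ≤ p.length
  · exact ⟨n, rfl, h⟩
  · exact ⟨p.length, by rw [p.getVert_of_length_le (le_of_not_ge h), p.getVert_length], le_refl _⟩

lemma getVert_injOn {G : SimpleGraph V} : ∀ {u v : V} (p : G.Walk u v), p.IsPath →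
    ∀ i j, i ≤ p.length → j ≤ p.length → p.getVert i = p.getVert j → i = j := by
  intro u v p
  induction p with
  | nil =>
    intro _ i j hi hj _
    simp only [SimpleGraph.Walk.length_nil, Nat.le_zero] at hi hj
    omega
  | @cons u w v h q ih =>
    intro hp i j hi hj hij
    rw [SimpleGraph.Walk.cons_isPath_iff] at hp
    simp only [SimpleGraph.Walk.length_cons] at hi hj
    match i, j with
    | 0, 0 => rfl
    | 0, (m+1) =>
      exfalso
      rw [SimpleGraph.Walk.getVert_zero, SimpleGraph.Walk.getVert_cons_succ] at hij
      exact hp.2 (hij ▸ getVert_mem_support q m)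
    | (m+1), 0 =>
      exfalso
      rw [SimpleGraph.Walk.getVert_zero, SimpleGraph.Walk.getVert_cons_succ] at hij
      exact hp.2 (hij ▸ getVert_mem_support q m)
    | (m+1), (n+1) =>
      simp only [SimpleGraph.Walk.getVert_cons_succ] at hij
      have := ih hp.1 m n (by omega) (by omega) hij
      omega

/-- prefix sums of a jump list -/
def ps (s : ℕ) : List ℕ → List ℕ
  | [] => [s]
  | j :: L => s :: ps (s + j) L

lemma mem_ps_bound : ∀ (L : List ℕ) (s t : ℕ), t ∈ ps s L → s ≤ t ∧ t ≤ s + L.sum := by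
  intro L
  induction L with
  | nil => intro s t ht; simp [ps] at ht; omega
  | cons j L ih =>
    intro s t ht
    simp only [ps, List.mem_cons] at ht
    rcases ht with rfl | ht
    · simp
    · have := ih (s + j) t ht
      simp only [List.sum_cons]
      omega

lemma ps_pairwise : ∀ (L : List ℕ) (s : ℕ), (∀ j ∈ L, 1 ≤ j) →
    List.Pairwise (· < ·) (ps s L) := by
  intro L
  induction L with
  | nil => intro s _; simp [ps]
  | cons j L ih =>
    intro s hL
    simp only [ps]
    refine List.pairwise_cons.2 ⟨?_, ih (s + j) fun j hj => hL j (List.mem_cons_of_mem _ hj)⟩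
    intro t ht
    have := mem_ps_bound L (s + j) t ht
    have := hL j List.mem_cons_self
    omega

lemma walk_of_jumps {H : SimpleGraph V} (f : ℕ → V) :
    ∀ (L : List ℕ) (s : ℕ),
      (∀ c j, j ∈ L → c + j ≤ s + L.sum → H.Adj (f c) (f (c + j))) →
      ∃ w : H.Walk (f s) (f (s + L.sum)), w.length = L.length ∧
        w.support = (ps s L).map f := by
  intro L
  induction L with
  | nil =>
    intro s _
    simp only [List.sum_nil, Nat.add_zero, List.length_nil]
    exact ⟨SimpleGraph.Walk.nil, rfl, by simp [ps]⟩
  | cons j L ih =>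
    intro s Hadj
    have hrw : s + (j :: L).sum = (s + j) + L.sum := by
      simp [List.sum_cons]; omega
    rw [hrw]
    obtain ⟨w', hl, hsup⟩ := ih (s + j)
      (fun c j' hj' hb => Hadj c j' (List.mem_cons_of_mem _ hj') (by rw [hrw]; omega))
    have hadj : H.Adj (f s) (f (s + j)) :=
      Hadj s j List.mem_cons_self (by simp [List.sum_cons])
    exact ⟨SimpleGraph.Walk.cons hadj w', by simp [hl], by simp [ps, hsup]⟩

lemma decomp (a : ℕ) (ha : 2 ≤ a) (B : ℕ) (hB1 : 1 ≤ B) (hB : (a - 1) ∣ (B - 1)) :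
    ∀ (n m : ℕ), n ≤ m → m ≤ n * B → (a - 1) ∣ (m - n) →
    ∃ L : List ℕ, L.length = n ∧ L.sum = m ∧ ∀ j ∈ L, 1 ≤ j ∧ j ≤ B ∧ (a - 1) ∣ (j - 1) := by
  intro n
  induction n with
  | zero =>
    intro m hnm hmB _
    simp only [Nat.zero_mul, Nat.le_zero] at hmB
    exact ⟨[], rfl, by simp [hmB], by simp⟩
  | succ n ih =>
    intro m hnm hmB hdvd
    set j₀ := min B (m - n) with hj₀
    set w := (j₀ - 1) % (a - 1) with hw
    set j := j₀ - w with hj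
    have hj₀1 : 1 ≤ j₀ := by omega
    have hw_le : w ≤ j₀ - 1 := Nat.mod_le _ _
    have hwa : w < a - 1 := Nat.mod_lt _ (by omega)
    have hj1 : 1 ≤ j := by omega
    have hjB : j ≤ B := by omega
    have hjdvd : (a - 1) ∣ (j - 1) := by
      have : j - 1 = (j₀ - 1) - (j₀ - 1) % (a - 1) := by omega
      rw [this]
      exact Nat.dvd_sub_mod _
    -- if j₀ = B then w = 0
    have hwB : j₀ = B → w = 0 := by
      intro hEq
      rw [hw, hEq]
      exact Nat.dvd_iff_mod_eq_zero.mp hB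
    -- if n = 0 then w = 0
    have hwn : n = 0 → w = 0 := by
      intro hEq
      subst hEq
      have hmBle : m ≤ B := by omega
      have : j₀ = m := by omega
      rw [hw, this]
      exact Nat.dvd_iff_mod_eq_zero.mp (by simpa using hdvd)
    have hrec1 : n ≤ m - j := by omega
    have hrec2 : m - j ≤ n * B := by
      rcases Nat.lt_or_ge (m - n) B with hlt | hge
      · -- j₀ = m - n, m - j = n + w
        have hj₀' : j₀ = m - n := by omega
        rcases Nat.eq_zero_or_pos n with rfl | hn
        · have := hwn rfl; omega
        · -- w ≤ j₀ - 1 ≤ B - 2 ≤ n * (B-1)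
          have h1 : w ≤ B - 2 := by omega
          have h2 : B - 1 ≤ n * (B - 1) := Nat.le_mul_of_pos_left _ hn
          have h3 : n * (B - 1) + n = n * B := by
            have hB' : B - 1 + 1 = B := by omega
            calc n * (B - 1) + n = n * ((B - 1) + 1) := by ring
              _ = n * B := by rw [hB']
          omega
      · -- j₀ = B, w = 0, m - j = m - B ≤ n*B since m ≤ (n+1)*B
        have hj₀' : j₀ = B := by omega
        have hw0 : w = 0 := hwB hj₀'
        have : m ≤ (n + 1) * B := hmB
        have : (n + 1) * B = n * B + B := by ring
        omega
    have hrecd : (a - 1) ∣ (m - j - n) := by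
      have h1 : m - j - n = (m - (n + 1)) - (j - 1) := by omega
      rw [h1]
      exact Nat.dvd_sub hdvd hjdvd
    obtain ⟨L, hL1, hL2, hL3⟩ := ih (m - j) hrec1 hrec2 hrecd
    refine ⟨j :: L, by simp [hL1], by simp [hL2]; omega, ?_⟩
    intro j' hj'
    rcases List.mem_cons.1 hj' with rfl | hj'
    · exact ⟨hj1, hjB, hjdvd⟩
    · exact hL3 j' hj'

lemma cycleStep_adj_left {k : ℕ} {H : SimpleGraph V} {u v : V} (h : H.Adj u v) :
    (cycleStep k H).Adj u v := Or.inl h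

lemma cycleStep_adj_path {k : ℕ} {H : SimpleGraph V} {u v : V} (hne : u ≠ v)
    (w : H.Walk u v) (hw : w.IsPath) (hl : w.length = k - 1) :
    (cycleStep k H).Adj u v := Or.inr ⟨hne, w, hw, hl⟩

lemma jump_adj (k : ℕ) (hk : 3 ≤ k) {G : SimpleGraph V} {x y : V} (p : G.Walk x y)
    (hp : p.IsPath) :
    ∀ (i s m : ℕ), 1 ≤ m → (k - 2) ∣ (m - 1) → m ≤ (k - 1) ^ i → s + m ≤ p.length →
      (cycleProcess k G i).Adj (p.getVert s) (p.getVert (s + m)) := by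
  intro i
  induction i with
  | zero =>
    intro s m h1 _ hle hb
    have hm : m = 1 := by
      simp only [pow_zero] at hle
      omega
    subst hm
    exact p.adj_getVert_succ (by omega)
  | succ i ih =>
    intro s m h1 hdvd hle hb
    show (cycleStep k (cycleProcess k G i)).Adj _ _
    by_cases hsmall : m ≤ (k - 1) ^ i
    · exact cycleStep_adj_left (ih s m h1 hdvd hsmall hb)
    · -- big jump : decompose into k-1 jumps of size ≤ (k-1)^i
      push_neg at hsmall
      have hBpos : 1 ≤ (k - 1) ^ i := Nat.one_le_pow _ _ (by omega)
      have hm2 : 2 ≤ m := by omega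
      have hma : k - 1 ≤ m := by
        have := Nat.le_of_dvd (by omega) hdvd
        omega
      have hBdvd : (k - 1 - 1) ∣ ((k - 1) ^ i - 1) := by
        have := Nat.sub_dvd_pow_sub_pow (k - 1) 1 i
        simpa using this
      have hmdvd : (k - 1 - 1) ∣ (m - (k - 1)) := by
        have h2 : m - (k - 1) = (m - 1) - (k - 1 - 1) := by omega
        rw [h2]
        exact Nat.dvd_sub (by simpa [show k - 1 - 1 = k - 2 by omega] using hdvd) dvd_rfl
      obtain ⟨L, hL1, hL2, hL3⟩ := decomp (k - 1) (by omega) ((k - 1) ^ i) hBpos hBdvd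
        (k - 1) m hma
        (by
          have := pow_succ (k - 1) i
          calc m ≤ (k - 1) ^ (i + 1) := hle
            _ = (k - 1) ^ i * (k - 1) := pow_succ _ _
            _ = (k - 1) * (k - 1) ^ i := Nat.mul_comm _ _)
        hmdvd
      subst hL2
      obtain ⟨w, hwl, hwsup⟩ := walk_of_jumps (H := cycleProcess k G i) p.getVert L s
        (fun c j hj hbnd => by
          obtain ⟨hj1, hjB, hjd⟩ := hL3 j hj
          exact ih c j hj1 (by simpa [show k - 1 - 1 = k - 2 by omega] using hjd) hjB
            (by omega))
      have hinj := getVert_injOn p hp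
      have hnodup : w.support.Nodup := by
        rw [hwsup]
        have hpw : List.Pairwise (· < ·) (ps s L) :=
          ps_pairwise L s (fun j hj => (hL3 j hj).1)
        have hpw' : List.Pairwise (fun a b => p.getVert a ≠ p.getVert b) (ps s L) := by
          refine List.Pairwise.imp_of_mem ?_ hpw
          intro a b ha hb hab
          have hba := mem_ps_bound L s a ha
          have hbb := mem_ps_bound L s b hb
          intro hEq
          have := hinj a b (by omega) (by omega) hEq
          omega
        exact hpw'.map _ (fun a b h => h)
      have hne : p.getVert s ≠ p.getVert (s + L.sum) := by
        intro hEq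
        have := hinj s (s + L.sum) (by omega) (by omega) hEq
        omega
      exact cycleStep_adj_path hne w ⟨⟨Walk.edges_nodup_of_support_nodup hnodup⟩, hnodup⟩
        (by rw [hwl, hL1])

end CycleAux

/-- In the `C_k`-bootstrap process, for vertices in the same component,
`dist_{G_i}(x,y) ≤ ⌊dist_{G_0}(x,y)/(k-1)^i⌋ + k - 2`, with the improvement
`dist_{G_i}(x,y) ≤ dist_{G_0}(x,y)/(k-1)^i` when `(k-1)^i` divides `dist_{G_0}(x,y)`. -/
theorem cycleProcess_dist_upper (k : ℕ) (hk : 3 ≤ k) {V : Type*} (G : SimpleGraph V)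
    (x y : V) (hreach : G.Reachable x y) (i : ℕ) (hi : 1 ≤ i) :
    (cycleProcess k G i).dist x y ≤ G.dist x y / (k - 1) ^ i + k - 2 ∧
    ((k - 1) ^ i ∣ G.dist x y → (cycleProcess k G i).dist x y ≤ G.dist x y / (k - 1) ^ i) := by
  classical
  open CycleAux SimpleGraph in
  obtain ⟨p, hp, hlen⟩ := hreach.exists_path_of_dist
  set d := G.dist x y with hdd
  set B := (k - 1) ^ i with hBB
  have hBpos : 1 ≤ B := Nat.one_le_pow _ _ (by omega)
  have hBdvd : (k - 2) ∣ (B - 1) := by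
    have := Nat.sub_dvd_pow_sub_pow (k - 1) 1 i
    simpa [show k - 1 - 1 = k - 2 by omega] using this
  have hd : B * (d / B) + d % B = d := Nat.div_add_mod d B
  have key : ∀ L : List ℕ, L.sum = d → (∀ j ∈ L, 1 ≤ j ∧ j ≤ B ∧ (k - 2) ∣ (j - 1)) →
      (cycleProcess k G i).dist x y ≤ L.length := by
    intro L hsum hcond
    obtain ⟨w, hwl, _⟩ := walk_of_jumps (H := cycleProcess k G i) p.getVert L 0
      (fun c j hj hbnd => by
        obtain ⟨hj1, hjB, hjd⟩ := hcond j hj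
        exact jump_adj k hk p hp i c j hj1 hjd hjB (by omega))
    have h0 : p.getVert 0 = x := p.getVert_zero
    have h1 : p.getVert (0 + L.sum) = y := by
      rw [Nat.zero_add, hsum, ← hlen, p.getVert_length]
    calc (cycleProcess k G i).dist x y ≤ (w.copy h0 h1).length := dist_le _
      _ = L.length := by rw [Walk.length_copy, hwl]
  have main0 : (k - 1) ^ i ∣ d → (cycleProcess k G i).dist x y ≤ d / B := by
    intro hdvd
    have hr : d % B = 0 := Nat.dvd_iff_mod_eq_zero.mp (by rwa [← hBB] at hdvd)
    have := key (List.replicate (d / B) B)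
      (by simp [List.sum_replicate, smul_eq_mul, Nat.mul_comm]; omega)
      (by
        intro j hj
        rw [List.eq_of_mem_replicate hj]
        exact ⟨hBpos, le_refl _, hBdvd⟩)
    simpa using this
  refine ⟨?_, main0⟩
  by_cases hr : d % B = 0
  · have h := main0 (Nat.dvd_of_mod_eq_zero (by rwa [hBB] at hr))
    omega
  · set r := d % B with hrr
    set e := (r - 1) % (k - 2) with hee
    have her : e ≤ r - 1 := Nat.mod_le _ _
    have hek : e < k - 2 := Nat.mod_lt _ (by omega)
    have hrB : r < B := Nat.mod_lt _ (by omega)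
    have hre1 : 1 ≤ r - e := by omega
    have hredvd : (k - 2) ∣ (r - e - 1) := by
      have : r - e - 1 = (r - 1) - (r - 1) % (k - 2) := by omega
      rw [this]
      exact Nat.dvd_sub_mod _
    have h := key (List.replicate (d / B) B ++ (r - e) :: List.replicate e 1)
      (by
        simp [List.sum_replicate, smul_eq_mul, Nat.mul_comm]
        omega)
      (by
        intro j hj
        rcases List.mem_append.1 hj with hj | hj
        · rw [List.eq_of_mem_replicate hj]
          exact ⟨hBpos, le_refl _, hBdvd⟩
        · rcases List.mem_cons.1 hj with rfl | hj
          · exact ⟨hre1, by omega, hredvd⟩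
          · rw [List.eq_of_mem_replicate hj]
            exact ⟨le_refl _, hBpos, by simp⟩)
    simp only [List.length_append, List.length_replicate, List.length_cons] at h
    omega
end

section
/- Let k ≥ 3, let (P^i) be the C_k-bootstrap process on the path P_n with vertex set {0,...,n-1}, and define A_i = {(k-1)^i - α(k-2) - βk : α, β ∈ ℕ}. If x < y and xy is an edge of P^i for some i ≥ 1, then y - x ∈ A_i. -/
open SimpleGraph

/-- A path (in the graph-theoretic sense) in the path graph is monotone: its
support is exactly an interval and its length is the distance between endpoints. -/
lemma pg_mono {n : ℕ} {x y : Fin n} (p : (pathGraph n).Walk x y) (hp : p.IsPath) :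
    ((y : ℕ) = (x : ℕ) + p.length ∧
      ∀ v : Fin n, ((x:ℕ) ≤ (v:ℕ) ∧ (v:ℕ) ≤ (y:ℕ) ↔ v ∈ p.support)) ∨
    ((x : ℕ) = (y : ℕ) + p.length ∧
      ∀ v : Fin n, ((y:ℕ) ≤ (v:ℕ) ∧ (v:ℕ) ≤ (x:ℕ) ↔ v ∈ p.support)) := by
  induction p with
  | nil =>
    left
    refine ⟨by simp, fun v => ?_⟩
    simp only [Walk.support_nil, List.mem_singleton]
    constructor
    · rintro ⟨h1, h2⟩
      exact Fin.ext (le_antisymm h2 h1)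
    · rintro rfl; exact ⟨le_refl _, le_refl _⟩
  | @cons x z y h q ih =>
    rw [Walk.cons_isPath_iff] at hp
    obtain ⟨hq, hxs⟩ := hp
    have hzs : z ∈ q.support := Walk.start_mem_support q
    rcases pathGraph_adj.mp h with hz | hz <;> rcases ih hq with ⟨hlen, hsupp⟩ | ⟨hlen, hsupp⟩
    · -- z = x+1, y = z + len (going up)
      left
      refine ⟨by simp [Walk.length_cons]; omega, fun v => ?_⟩
      simp only [Walk.support_cons, List.mem_cons]
      constructor
      · rintro ⟨h1, h2⟩
        by_cases hv : (v:ℕ) = (x:ℕ)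
        · exact Or.inl (Fin.ext hv)
        · exact Or.inr ((hsupp v).mp ⟨by omega, h2⟩)
      · rintro (rfl | hv)
        · exact ⟨le_refl _, by omega⟩
        · have := (hsupp v).mpr hv; omega
    · -- z = x+1, but q goes down : z = y + len
      by_cases h0 : q.length = 0
      · -- y = z = x+1 : going up by one
        left
        refine ⟨by simp [Walk.length_cons]; omega, fun v => ?_⟩
        simp only [Walk.support_cons, List.mem_cons]
        constructor
        · rintro ⟨h1, h2⟩
          by_cases hv : (v:ℕ) = (x:ℕ)
          · exact Or.inl (Fin.ext hv)
          · exact Or.inr ((hsupp v).mp ⟨by omega, by omega⟩)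
        · rintro (rfl | hv)
          · exact ⟨le_refl _, by omega⟩
          · have := (hsupp v).mpr hv; omega
      · exact absurd ((hsupp x).mp ⟨by omega, by omega⟩) hxs
    · -- x = z+1, q goes up : y = z + len
      by_cases h0 : q.length = 0
      · right
        refine ⟨by simp [Walk.length_cons]; omega, fun v => ?_⟩
        simp only [Walk.support_cons, List.mem_cons]
        constructor
        · rintro ⟨h1, h2⟩
          by_cases hv : (v:ℕ) = (x:ℕ)
          · exact Or.inl (Fin.ext hv)
          · exact Or.inr ((hsupp v).mp ⟨by omega, by omega⟩)
        · rintro (rfl | hv)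
          · exact ⟨by omega, le_refl _⟩
          · have := (hsupp v).mpr hv; omega
      · exact absurd ((hsupp x).mp ⟨by omega, by omega⟩) hxs
    · -- x = z+1, z = y + len (going down)
      right
      refine ⟨by simp [Walk.length_cons]; omega, fun v => ?_⟩
      simp only [Walk.support_cons, List.mem_cons]
      constructor
      · rintro ⟨h1, h2⟩
        by_cases hv : (v:ℕ) = (x:ℕ)
        · exact Or.inl (Fin.ext hv)
        · exact Or.inr ((hsupp v).mp ⟨h1, by omega⟩)
      · rintro (rfl | hv)
        · exact ⟨by omega, le_refl _⟩
        · have := (hsupp v).mpr hv; omega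

/-- Numerical semigroup lemma: if `m ∈ ⟨k-2, k⟩` and `m < (k-1)^i` (with `i ≥ 1`),
then `2(k-1)^i - m ∈ ⟨k-2, k⟩`. -/
lemma lemL (k i a b : ℕ) (hk : 3 ≤ k) (hi : 1 ≤ i)
    (hle : a*(k-2) + b*k + 1 ≤ (k-1)^i) :
    ∃ a' b' : ℕ, a*(k-2) + b*k + a'*(k-2) + b'*k = 2*(k-1)^i := by
  obtain ⟨c, rfl⟩ : ∃ c, k = c + 3 := ⟨k-3, by omega⟩
  obtain ⟨j, rfl⟩ : ∃ j, i = j + 1 := ⟨i-1, by omega⟩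
  have e2 : c + 3 - 2 = c + 1 := by omega
  have e1 : c + 3 - 1 = c + 2 := by omega
  rw [e2, e1] at hle ⊢
  set r := a % (c+3) with hr'
  set s := a / (c+3) with hs'
  have hqr : a = (c+3)*s + r := (Nat.div_add_mod a (c+3)).symm
  set b1 := b + s*(c+1) with hb1'
  have hm : a*(c+1) + b*(c+3) = r*(c+1) + b1*(c+3) := by rw [hqr, hb1']; ring
  have hP1 : 1 ≤ (c+2)^j := Nat.one_le_pow _ _ (by omega)
  have hpow : (c+2)^(j+1) = (c+2)^j*(c+2) := pow_succ _ _
  have hb1 : b1 ≤ (c+2)^j := by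
    by_contra hcon
    push_neg at hcon
    have h' : ((c+2)^j + 1)*(c+3) ≤ b1*(c+3) := Nat.mul_le_mul_right _ (by omega)
    nlinarith [hm, hle, hpow]
  have hr : r ≤ (c+2)^j := by
    rcases Nat.eq_zero_or_pos j with hj | hj
    · subst hj
      simp only [pow_zero, pow_one] at hle hm ⊢
      by_contra hcon
      push_neg at hcon
      have h' : 2*(c+1) ≤ r*(c+1) := Nat.mul_le_mul_right _ (by omega)
      nlinarith [hm, hle]
    · have h1 : r ≤ c + 2 := by
        have := Nat.mod_lt a (show 0 < c + 3 by omega)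
        omega
      have h2 : c + 2 ≤ (c+2)^j := Nat.le_self_pow (by omega) _
      omega
  obtain ⟨u, hu⟩ := Nat.exists_eq_add_of_le hr
  obtain ⟨v, hv⟩ := Nat.exists_eq_add_of_le hb1
  refine ⟨u, v, ?_⟩
  rw [hm, hpow]
  have hrvz : (b1:ℤ) + v = r + u := by
    have : (r:ℤ) + u = (c+2)^j := by exact_mod_cast hu.symm
    have h2 : (b1:ℤ) + v = (c+2)^j := by exact_mod_cast hv.symm
    omega
  zify
  have huz : ((c:ℤ)+2)^j = r + u := by exact_mod_cast hu
  rw [huz]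
  linear_combination ((c:ℤ)+3) * hrvz

/-- Master lemma: every edge of the process at time `i` has difference in `A_i`. -/
lemma master (k n : ℕ) (hk : 3 ≤ k) :
    ∀ i : ℕ, ∀ x y : Fin n, (x:ℕ) < (y:ℕ) →
      (cycleProcess k (SimpleGraph.pathGraph n) i).Adj x y →
      ∃ a b : ℕ, (y:ℕ) + a*(k-2) + b*k = (k-1)^i + (x:ℕ) := by
  intro i
  induction i with
  | zero =>
    intro x y hxy hadj
    have h : (x:ℕ) + 1 = y ∨ (y:ℕ) + 1 = x := pathGraph_adj.mp hadj
    exact ⟨0, 0, by simp; omega⟩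
  | succ i IH =>
    intro x y hxy hadj
    rcases hadj with hold | ⟨hne, p, hp, hl⟩
    · -- old edge
      obtain ⟨a, b, hab⟩ := IH x y hxy hold
      refine ⟨a + (k-1)^i, b, ?_⟩
      have hpow : (k-1)^(i+1) = (k-1)^i*(k-2) + (k-1)^i := by
        rw [pow_succ, show k - 1 = (k-2) + 1 by omega]; ring
      rw [add_mul, hpow]
      linarith [hab]
    · -- new edge, from a path of length k-1 at time i
      rcases i with _ | j
      · -- time 0 : path in the path graph, monotone
        have hm := pg_mono (show (pathGraph n).Walk x y from p) hp
        have hm' : ((y:ℕ) = (x:ℕ) + p.length) ∨ ((x:ℕ) = (y:ℕ) + p.length) := by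
          rcases hm with ⟨hlen, _⟩ | ⟨hlen, _⟩
          · exact Or.inl hlen
          · exact Or.inr hlen
        exact ⟨0, 0, by simp [pow_one]; omega⟩
      · -- time j+1 ≥ 1
        have edge : ∀ u w : Fin n, (cycleProcess k (SimpleGraph.pathGraph n) (j+1)).Adj u w →
            ∃ a b : ℕ, (w:ℕ) + a*(k-2) + b*k = (k-1)^(j+1) + (u:ℕ) := by
          intro u w huw
          rcases Nat.lt_trichotomy (u:ℕ) (w:ℕ) with hlt | heq | hgt
          · exact IH u w hlt huw
          · exact absurd (Fin.ext heq) huw.ne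
          · obtain ⟨a1, b1, h1⟩ := IH w u hgt huw.symm
            have hbd : a1*(k-2) + b1*k + 1 ≤ (k-1)^(j+1) := by linarith [h1]
            obtain ⟨a2, b2, h2⟩ := lemL k (j+1) a1 b1 hk (by omega) hbd
            exact ⟨a2, b2, by linarith [h1, h2]⟩
        have walkLem : ∀ (u v : Fin n)
            (q : (cycleProcess k (SimpleGraph.pathGraph n) (j+1)).Walk u v),
            ∃ a b : ℕ, (v:ℕ) + a*(k-2) + b*k = q.length * (k-1)^(j+1) + (u:ℕ) := by
          intro u v q
          induction q with
          | nil => exact ⟨0, 0, by simp⟩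
          | @cons u w v h q ihq =>
            obtain ⟨a, b, hab⟩ := ihq
            obtain ⟨a1, b1, h1⟩ := edge u w h
            refine ⟨a + a1, b + b1, ?_⟩
            simp only [Walk.length_cons]
            rw [add_mul, add_mul, add_mul, one_mul]
            linarith [hab, h1]
        obtain ⟨a, b, hab⟩ := walkLem x y p
        rw [hl] at hab
        refine ⟨a, b, ?_⟩
        have hpow : (k-1) * (k-1)^(j+1) = (k-1)^(j+1+1) := by rw [pow_succ]; ring
        rw [← hpow]
        linarith [hab]

/-- In the `C_k`-bootstrap process on the path `P_n`, every edge `xy` with `x < y`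
present at time `i ≥ 1` satisfies `y - x ∈ A_i = {(k-1)^i - α(k-2) - βk : α, β ∈ ℕ}`. -/
theorem cycleProcess_path_edge_form (k n : ℕ) (hk : 3 ≤ k) (i : ℕ) (hi : 1 ≤ i)
    (x y : Fin n) (hxy : x < y)
    (hadj : (cycleProcess k (SimpleGraph.pathGraph n) i).Adj x y) :
    ∃ α β : ℕ, ((y : ℤ) - (x : ℤ)) = ((k : ℤ) - 1) ^ i - α * ((k : ℤ) - 2) - β * k := by
  obtain ⟨a, b, hab⟩ := master k n hk i x y hxy hadj
  refine ⟨a, b, ?_⟩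
  have h2 : ((k:ℤ) - 1) = ((k - 1 : ℕ) : ℤ) := by push_cast [Nat.cast_sub (by omega : 1 ≤ k)]; ring
  have h3 : ((k:ℤ) - 2) = ((k - 2 : ℕ) : ℤ) := by push_cast [Nat.cast_sub (by omega : 2 ≤ k)]; ring
  rw [h2, h3]
  have : ((y:ℕ) : ℤ) + a*((k-2 : ℕ) : ℤ) + b*(k:ℤ) = (((k-1:ℕ):ℤ))^i + ((x:ℕ) : ℤ) := by
    exact_mod_cast congrArg (Nat.cast : ℕ → ℤ) hab
  push_cast at this ⊢
  linarith [this]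
end
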